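/- arXiv:1909.06420 — 4 statements merged into one kernel-verified Lean document; each statement's English description precedes it below -/
import Mathlib

section
/- Consider the Markov chain on state space ℕ (number of components marking Wait) where, given state m ≥ 1, each of m components independently stays at Wait with probability 1/2 or moves to Ready with probability 1/2, and exactly one component marks Ready when exactly one of the m components moves. Repeating the 'wait' action from any initial m ≥ 1, with probability one a configuration is eventually reached in which exactly one component marks Ready. -/
open MeasureTheory
open scoped ProbabilityTheory

open ProbabilityTheory in
lemma indepSet_indepFun_indicator_aux {Ω : Type*} [MeasurableSpace Ω] {μ : Measure Ω}
    {s t : Set Ω} (h : IndepSet s t μ) :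
    IndepFun (s.indicator fun _ => (1 : ℝ)) (t.indicator fun _ => (1 : ℝ)) μ := by
  rw [IndepSet_iff_Indep] at h
  have hs : Measurable[MeasurableSpace.generateFrom {s}] (s.indicator fun _ => (1 : ℝ)) :=
    measurable_const.indicator (MeasurableSpace.measurableSet_generateFrom rfl)
  have ht : Measurable[MeasurableSpace.generateFrom {t}] (t.indicator fun _ => (1 : ℝ)) :=
    measurable_const.indicator (MeasurableSpace.measurableSet_generateFrom rfl)
  exact indep_of_indep_of_le_right (indep_of_indep_of_le_left h hs.comap_le) ht.comap_le

/-- In the waiting gadget, from any configuration with `m ≥ 1`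
components at `Wait`, repeating the action `wait` almost surely eventually
reaches a configuration in which exactly one component marks `Ready`.

Model: at each round `t`, each of the `m` components independently moves to
`Ready` with probability `1/2` (and all `Ready` components return to `Wait`),
so the rounds are independent and the event `E t` = "exactly one component
marks `Ready` at time `t`" has probability `m · (1/2)^m`.  The conclusion is
that with probability one some `E t` occurs. -/
theorem waiting_gadget_isolates_one_component
    {Ω : Type*} [MeasurableSpace Ω] (μ : Measure Ω) [IsProbabilityMeasure μ]
    (m : ℕ) (hm : 1 ≤ m)
    (E : ℕ → Set Ω) (hmeas : ∀ t, MeasurableSet (E t))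
    (hprob : ∀ t, μ (E t) = (m : ENNReal) * (1 / 2) ^ m)
    (hindep : ∀ s t : ℕ, s ≠ t → ProbabilityTheory.IndepSet (E s) (E t) μ) :
    μ (⋃ t : ℕ, E t) = 1 := by
  classical
  have hp0 : (0:ℝ) < (m : ℝ) * (1 / 2) ^ m := by
    have hm' : (0:ℝ) < m := by exact_mod_cast hm
    positivity
  set p : ℝ := (m : ℝ) * (1 / 2) ^ m with hp
  have htoReal : ∀ t, (μ (E t)).toReal = p := by
    intro t
    rw [hprob t, ENNReal.toReal_mul, ENNReal.toReal_pow]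
    simp [hp, ENNReal.toReal_div]
  set X : ℕ → Ω → ℝ := fun t => (E t).indicator fun _ => 1 with hX
  have hXmem : ∀ t, MemLp (X t) 2 μ := fun t =>
    memLp_indicator_const 2 (hmeas t) 1 (Or.inr (measure_ne_top μ _))
  have hXint : ∀ t, μ[X t] = p := by
    intro t
    simp only [hX]
    rw [integral_indicator_const (1:ℝ) (hmeas t), measureReal_def, htoReal t, smul_eq_mul, mul_one]
  have hXsq : ∀ t, (X t) ^ 2 = X t := by
    intro t
    funext ω
    by_cases h : ω ∈ E t <;> simp [hX, h]
  have hvar : ∀ t, ProbabilityTheory.variance (X t) μ ≤ p := by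
    intro t
    calc ProbabilityTheory.variance (X t) μ ≤ μ[(X t) ^ 2] :=
          ProbabilityTheory.variance_le_expectation_sq (hXmem t).1
      _ = p := by rw [hXsq t]; exact hXint t
  set S : ℕ → Ω → ℝ := fun n => ∑ t ∈ Finset.range n, X t with hS
  have hSmem : ∀ n, MemLp (S n) 2 μ := fun n => memLp_finset_sum' _ (fun i _ => hXmem i)
  have hSint : ∀ n : ℕ, μ[S n] = (n : ℝ) * p := by
    intro n
    simp only [hS, Finset.sum_apply]
    rw [integral_finset_sum _ (fun i _ => (hXmem i).integrable one_le_two)]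
    simp [hXint, Finset.sum_const, mul_comm]
  have hSvar : ∀ n : ℕ, ProbabilityTheory.variance (S n) μ ≤ (n : ℝ) * p := by
    intro n
    rw [hS, ProbabilityTheory.IndepFun.variance_sum (fun i _ => hXmem i)
      (fun i _ j _ hij => indepSet_indepFun_indicator_aux (hindep i j hij))]
    calc (∑ i ∈ Finset.range n, ProbabilityTheory.variance (X i) μ)
        ≤ ∑ _i ∈ Finset.range n, p := Finset.sum_le_sum fun i _ => hvar i
      _ = n * p := by simp [Finset.sum_const, mul_comm]
  have key : ∀ n : ℕ, 1 ≤ n → μ (⋃ t, E t)ᶜ ≤ ENNReal.ofReal (1 / (n * p)) := by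
    intro n hn
    have hn' : (0:ℝ) < n := by exact_mod_cast hn
    have hc : 0 < (n:ℝ) * p := mul_pos hn' hp0
    have cheb := ProbabilityTheory.meas_ge_le_variance_div_sq (hSmem n) hc
    refine le_trans (measure_mono ?_) (le_trans cheb ?_)
    · intro ω hω
      simp only [Set.mem_compl_iff, Set.mem_iUnion, not_exists] at hω
      have hSω : S n ω = 0 := by
        simp only [hS, Finset.sum_apply]
        exact Finset.sum_eq_zero fun t _ => Set.indicator_of_notMem (hω t) _
      show (n:ℝ) * p ≤ |S n ω - μ[S n]|
      rw [hSω, hSint n, zero_sub, abs_neg, abs_of_pos hc]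
    · apply ENNReal.ofReal_le_ofReal
      have h1 : ProbabilityTheory.variance (S n) μ / ((n:ℝ) * p) ^ 2
          ≤ ((n:ℝ) * p) / ((n:ℝ) * p) ^ 2 := by gcongr; exact hSvar n
      refine h1.trans_eq ?_
      rw [sq]
      field_simp
  have hzero : μ (⋃ t, E t)ᶜ = 0 := by
    have htend : Filter.Tendsto (fun n : ℕ => ENNReal.ofReal (1 / (n * p)))
        Filter.atTop (nhds 0) := by
      rw [← ENNReal.ofReal_zero]
      apply ENNReal.tendsto_ofReal
      have heq : (fun n : ℕ => 1 / ((n:ℝ) * p)) = fun n : ℕ => (1 / p) * (1 / (n:ℝ)) := by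
        funext n
        rw [one_div, mul_inv, one_div, one_div, mul_comm]
      rw [heq]
      simpa using tendsto_one_div_atTop_nhds_zero_nat.const_mul (1 / p)
    have hle : μ (⋃ t, E t)ᶜ ≤ 0 :=
      ge_of_tendsto htend (Filter.eventually_atTop.2 ⟨1, fun n hn => key n hn⟩)
    exact le_antisymm hle zero_le
  exact (prob_compl_eq_zero_iff (MeasurableSet.iUnion hmeas)).1 hzero
end

section
/- For a k-bit binary counter holding value c < 2^k, there is a unique maximal sequence of 'safe' decrement actions; this sequence has length exactly c, and after executing it the counter holds 0. -/
/-- The decrement action `dec i` is safe on a counter holding `c` iff bit `i`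
of `c` is `1` and all lower bits are `0` (otherwise `dec i` is daemonic for
some marked state of the counter gadget). -/
def safeDec (c i : ℕ) : Prop := c.testBit i = true ∧ ∀ j < i, c.testBit j = false

/-- Executing `dec i` on a counter holding `c` (with `dec i` safe): bits
`0..i-1` flip from `0` to `1`, bit `i` flips from `1` to `0`, higher bits are
unchanged; i.e. the lowest `i+1` bits are all flipped. -/
def applyDec (c i : ℕ) : ℕ := c ^^^ (2 ^ (i + 1) - 1)

lemma testBitAux (i q r j : ℕ) (hr : r < 2 ^ i) :
    (2 ^ i * q + r).testBit j = if j < i then r.testBit j else q.testBit (j - i) := by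
  rcases lt_or_ge j i with h | h
  · simp only [h, if_true]
    rw [Nat.testBit_eq_decide_div_mod_eq, Nat.testBit_eq_decide_div_mod_eq]
    have e : 2 ^ i * q + r = 2 ^ j * (2 ^ (i - j) * q) + r := by
      rw [← mul_assoc, ← pow_add, Nat.add_sub_cancel' (le_of_lt h)]
    rw [e, Nat.mul_add_div (Nat.two_pow_pos j)]
    have e2 : 2 ^ (i - j) * q = 2 * (2 ^ (i - j - 1) * q) := by
      have h3 : i - j - 1 + 1 = i - j := by omega
      rw [← mul_assoc, ← pow_succ', h3]
    rw [e2, Nat.mul_add_mod]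
  · simp only [Nat.not_lt.2 h, if_false]
    rw [Nat.testBit_eq_decide_div_mod_eq, Nat.testBit_eq_decide_div_mod_eq]
    have e : (2:ℕ) ^ j = 2 ^ i * 2 ^ (j - i) := by rw [← pow_add]; congr 1; omega
    rw [e, ← Nat.div_div_eq_div_mul, Nat.mul_add_div (Nat.two_pow_pos i),
      Nat.div_eq_of_lt hr, Nat.add_zero]

lemma safeDec_pos {c i : ℕ} (h : safeDec c i) : 0 < c := by
  rcases Nat.eq_zero_or_pos c with rfl | h'
  · obtain ⟨h1, _⟩ := h
    rw [Nat.zero_testBit] at h1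
    exact absurd h1 (by simp)
  · exact h'

lemma applyDec_eq {c i : ℕ} (h : safeDec c i) : applyDec c i = c - 1 := by
  obtain ⟨h1, h2⟩ := h
  have hmod : c % 2 ^ i = 0 := by
    apply Nat.eq_of_testBit_eq
    intro j
    rw [Nat.testBit_mod_two_pow, Nat.zero_testBit]
    by_cases hj : j < i <;> simp [hj, h2 j]
  have hdiv : c / 2 ^ i % 2 = 1 := by
    rw [Nat.testBit_eq_decide_div_mod_eq] at h1; simpa using h1
  have hc : c = 2 ^ (i + 1) * (c / 2 ^ (i + 1)) + 2 ^ i := by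
    have := Nat.div_add_mod c (2 ^ (i + 1))
    have hm : c % 2 ^ (i + 1) = 2 ^ i := by
      rw [pow_succ, Nat.mod_mul, hmod, hdiv]; ring
    omega
  set q := c / 2 ^ (i + 1) with hq
  have hpos : (0:ℕ) < 2 ^ i := Nat.two_pow_pos i
  have hlt : 2 ^ i < 2 ^ (i + 1) := by
    rw [pow_succ]; omega
  have hsub : c - 1 = 2 ^ (i + 1) * q + (2 ^ i - 1) := by omega
  rw [applyDec, hsub]
  apply Nat.eq_of_testBit_eq
  intro j
  rw [Nat.testBit_xor, Nat.testBit_two_pow_sub_one,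
    testBitAux (i+1) q (2 ^ i - 1) j (by omega)]
  conv_lhs => rw [hc, testBitAux (i+1) q (2 ^ i) j hlt]
  rcases lt_or_ge j (i + 1) with hj | hj
  · simp only [hj, if_true, decide_eq_true_eq]
    rw [Nat.testBit_two_pow, Nat.testBit_two_pow_sub_one]
    by_cases he : i = j
    · subst he; simp
    · have : j < i := by omega
      simp [he, this, hj]
  · have hji : ¬ j < i + 1 := Nat.not_lt.2 hj
    simp [hji]

lemma exists_safeDec {v k : ℕ} (hv : 0 < v) (hk : v < 2 ^ k) : ∃ i < k, safeDec v i := by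
  have hex : ∃ i, v.testBit i = true := by
    obtain ⟨i, hi, _⟩ := Nat.exists_most_significant_bit (by omega : v ≠ 0)
    exact ⟨i, hi⟩
  classical
  let i := Nat.find hex
  refine ⟨i, ?_, Nat.find_spec hex, fun j hj => ?_⟩
  · by_contra hik
    have : v < 2 ^ i := lt_of_lt_of_le hk (Nat.pow_le_pow_right (by norm_num) (by omega))
    exact absurd (Nat.find_spec hex) (by simp [Nat.testBit_eq_false_of_lt (show v < 2 ^ Nat.find hex from this)])
  · have := Nat.find_min hex hj
    simpa using this

/-- For a `k`-bit binary counter holding value `c < 2^k`, there is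
a unique maximal sequence of safe decrement actions; this sequence has length
exactly `c`, and after executing it the counter holds `0`.  (Uniqueness:
the value after the `j`-th step is necessarily `c - j`.) -/
theorem counter_maximal_safe_decrement_sequence
    (k c : ℕ) (hc : c < 2 ^ k)
    (n : ℕ) (vals : Fin (n + 1) → ℕ)
    (h0 : vals 0 = c)
    (hstep : ∀ j : Fin n, ∃ i < k,
      safeDec (vals j.castSucc) i ∧ vals j.succ = applyDec (vals j.castSucc) i)
    (hmax : ¬ ∃ i < k, safeDec (vals (Fin.last n)) i) :
    n = c ∧ vals (Fin.last n) = 0 ∧ ∀ j : Fin (n + 1), vals j = c - (j : ℕ) := by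
  have key : ∀ m (hm : m ≤ n), vals ⟨m, Nat.lt_succ_of_le hm⟩ = c - m ∧ m ≤ c := by
    intro m
    induction m with
    | zero =>
      intro _
      refine ⟨?_, Nat.zero_le c⟩
      simpa using h0
    | succ m ih =>
      intro hm
      have hm' : m ≤ n := by omega
      obtain ⟨hval, hmc⟩ := ih hm'
      obtain ⟨i, hik, hsafe, happ⟩ := hstep ⟨m, by omega⟩
      have hcs : (⟨m, by omega⟩ : Fin n).castSucc = ⟨m, Nat.lt_succ_of_le hm'⟩ := rfl
      have hss : (⟨m, by omega⟩ : Fin n).succ = ⟨m + 1, Nat.lt_succ_of_le hm⟩ := rfl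
      rw [hcs] at hsafe happ
      rw [hss] at happ
      have hpos : 0 < vals ⟨m, Nat.lt_succ_of_le hm'⟩ := safeDec_pos hsafe
      rw [happ, applyDec_eq hsafe, hval]
      constructor
      · omega
      · omega
  have hlast : vals (Fin.last n) = c - n ∧ n ≤ c := key n le_rfl
  have hzero : c - n = 0 := by
    by_contra hne
    have hpos : 0 < c - n := Nat.pos_of_ne_zero hne
    have hlt : c - n < 2 ^ k := lt_of_le_of_lt (Nat.sub_le c n) hc
    obtain ⟨i, hik, hsafe⟩ := exists_safeDec hpos hlt
    exact hmax ⟨i, hik, hlast.1 ▸ hsafe⟩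
  refine ⟨by omega, by rw [hlast.1, hzero], fun j => ?_⟩
  have := (key j (by omega)).1
  simpa using this
end

section
/- In an MDP with finite state space, almost-sure reachability objectives admit memoryless deterministic optimal strategies: if there exists any strategy under which a target set T is reached with probability 1 from state s, then there exists a memoryless deterministic strategy σ : Q → Act under which T is reached with probability 1 from s. -/
open scoped ENNReal

variable {Q A : Type*} [Fintype Q] [DecidableEq Q] [Fintype A]

/-- `reachHist δ T σ t h q` : in the MDP with transition probabilities `δ`,
the probability of reaching the target set `T` within `t` steps from state
`q`, when the (history-dependent, deterministic) strategy `σ` is used and the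
history so far is `h` (most recent state first). -/
noncomputable def reachHist (δ : Q → A → Q → ℝ≥0∞) (T : Set Q) [DecidablePred (· ∈ T)]
    (σ : List Q → A) : ℕ → List Q → Q → ℝ≥0∞
  | 0, _, q => if q ∈ T then 1 else 0
  | t + 1, h, q => if q ∈ T then 1 else
      ∑ p : Q, δ q (σ (q :: h)) p * reachHist δ T σ t (q :: h) p

/-- `reachMemoryless δ T τ t q` : probability of reaching `T` within `t` steps
from `q` under the memoryless deterministic strategy `τ : Q → A`. -/
noncomputable def reachMemoryless (δ : Q → A → Q → ℝ≥0∞) (T : Set Q) [DecidablePred (· ∈ T)]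
    (τ : Q → A) : ℕ → Q → ℝ≥0∞
  | 0, q => if q ∈ T then 1 else 0
  | t + 1, q => if q ∈ T then 1 else
      ∑ p : Q, δ q (τ q) p * reachMemoryless δ T τ t p

section Aux

set_option linter.unusedSectionVars false

variable (δ : Q → A → Q → ℝ≥0∞) (T : Set Q) [DecidablePred (· ∈ T)]

/-- the value of state `q` : best reachability probability over all strategies. -/
noncomputable def vval (q : Q) : ℝ≥0∞ :=
  ⨆ σ : List Q → A, ⨆ t : ℕ, reachHist δ T σ t [] q

variable {δ T}

lemma reachHist_le_one (hδ : ∀ (q : Q) (a : A), ∑ p : Q, δ q a p = 1)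
    (σ : List Q → A) : ∀ (t : ℕ) (h : List Q) (q : Q), reachHist δ T σ t h q ≤ 1 := by
  intro t
  induction t with
  | zero =>
    intro h q
    rw [reachHist]
    split <;> simp
  | succ t ih =>
    intro h q
    rw [reachHist]
    split
    · exact le_rfl
    · calc ∑ p : Q, δ q (σ (q :: h)) p * reachHist δ T σ t (q :: h) p
          ≤ ∑ p : Q, δ q (σ (q :: h)) p * 1 :=
            Finset.sum_le_sum fun p _ => mul_le_mul_right (ih _ _) _
        _ = 1 := by simp [hδ]

lemma reachMemoryless_le_one (hδ : ∀ (q : Q) (a : A), ∑ p : Q, δ q a p = 1)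
    (τ : Q → A) : ∀ (t : ℕ) (q : Q), reachMemoryless δ T τ t q ≤ 1 := by
  intro t
  induction t with
  | zero =>
    intro q
    rw [reachMemoryless]
    split <;> simp
  | succ t ih =>
    intro q
    rw [reachMemoryless]
    split
    · exact le_rfl
    · calc ∑ p : Q, δ q (τ q) p * reachMemoryless δ T τ t p
          ≤ ∑ p : Q, δ q (τ q) p * 1 :=
            Finset.sum_le_sum fun p _ => mul_le_mul_right (ih _) _
        _ = 1 := by simp [hδ]

lemma reachHist_congr (σ σ' : List Q → A) :
    ∀ (t : ℕ) (q : Q) (h h' : List Q),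
      (∀ l : List Q, σ (l ++ q :: h) = σ' (l ++ q :: h')) →
      reachHist δ T σ t h q = reachHist δ T σ' t h' q := by
  intro t
  induction t with
  | zero => intro q h h' _; rw [reachHist, reachHist]
  | succ t ih =>
    intro q h h' hσ
    rw [reachHist, reachHist]
    have ha : σ (q :: h) = σ' (q :: h') := by simpa using hσ []
    by_cases hq : q ∈ T
    · simp [hq]
    · simp only [if_neg hq]
      refine Finset.sum_congr rfl fun p _ => ?_
      rw [ha, ih p (q :: h) (q :: h') fun l => by
        simpa [List.append_assoc] using hσ (l ++ [p])]

lemma reachHist_le_vval (σ : List Q → A) (t : ℕ) (h : List Q) (q : Q) :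
    reachHist δ T σ t h q ≤ vval δ T q := by
  have : reachHist δ T σ t h q = reachHist δ T (fun l => σ (l ++ h)) t [] q := by
    refine reachHist_congr σ _ t q h [] fun l => ?_
    simp [List.append_assoc]
  rw [this, vval]
  exact le_iSup_of_le (fun l => σ (l ++ h)) (le_iSup_of_le t le_rfl)

lemma vval_le_one (hδ : ∀ (q : Q) (a : A), ∑ p : Q, δ q a p = 1) (q : Q) :
    vval δ T q ≤ 1 :=
  iSup_le fun σ => iSup_le fun t => reachHist_le_one hδ σ t [] q

lemma vval_of_mem [Nonempty A] (hδ : ∀ (q : Q) (a : A), ∑ p : Q, δ q a p = 1)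
    {q : Q} (hq : q ∈ T) : vval δ T q = 1 := by
  refine le_antisymm (vval_le_one hδ q) ?_
  have : reachHist δ T (fun _ => Classical.arbitrary A) 0 [] q = 1 := by
    rw [reachHist, if_pos hq]
  calc (1 : ℝ≥0∞) = reachHist δ T (fun _ => Classical.arbitrary A) 0 [] q := this.symm
    _ ≤ vval δ T q := reachHist_le_vval _ _ _ _

/-- equality case in sums of `ℝ≥0∞`. -/
lemma sum_eq_of_le_of_sum_le {f g : Q → ℝ≥0∞} (hle : ∀ p, f p ≤ g p)
    (htop : ∑ p : Q, g p ≠ ∞) (hsum : ∑ p : Q, g p ≤ ∑ p : Q, f p) (p : Q) :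
    f p = g p := by
  by_contra hne
  have hlt : f p < g p := (hle p).lt_of_ne hne
  have h1 : ∑ p' ∈ Finset.univ.erase p, f p' ≤ ∑ p' ∈ Finset.univ.erase p, g p' :=
    Finset.sum_le_sum fun p' _ => hle p'
  have hf : ∑ p' ∈ Finset.univ.erase p, f p' ≠ ∞ := by
    refine ne_top_of_le_ne_top htop (le_trans h1 ?_)
    exact Finset.sum_le_sum_of_subset (Finset.erase_subset _ _)
  have hstrict : ∑ p' : Q, f p' < ∑ p' : Q, g p' := by
    rw [← Finset.sum_erase_add Finset.univ f (Finset.mem_univ p),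
        ← Finset.sum_erase_add Finset.univ g (Finset.mem_univ p)]
    exact ENNReal.add_lt_add_of_le_of_lt hf h1 hlt
  exact absurd hsum (not_le.mpr hstrict)

lemma exists_good_action (hδ : ∀ (q : Q) (a : A), ∑ p : Q, δ q a p = 1) [Nonempty A]
    {q : Q} (hq1 : vval δ T q = 1) (hqT : q ∉ T) :
    ∃ a : A, (∀ p, δ q a p ≠ 0 → vval δ T p = 1) ∧ ∑ p : Q, δ q a p * vval δ T p = 1 := by
  obtain ⟨a, -, ha⟩ := Finset.exists_max_image Finset.univ
    (fun a : A => ∑ p : Q, δ q a p * vval δ T p) Finset.univ_nonempty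
  have hle : vval δ T q ≤ ∑ p : Q, δ q a p * vval δ T p := by
    refine iSup_le fun σ => iSup_le fun t => ?_
    cases t with
    | zero => rw [reachHist, if_neg hqT]; exact zero_le
    | succ t =>
      rw [reachHist, if_neg hqT]
      calc ∑ p : Q, δ q (σ [q]) p * reachHist δ T σ t [q] p
          ≤ ∑ p : Q, δ q (σ [q]) p * vval δ T p :=
            Finset.sum_le_sum fun p _ => mul_le_mul_right (reachHist_le_vval _ _ _ _) _
        _ ≤ ∑ p : Q, δ q a p * vval δ T p := ha _ (Finset.mem_univ _)
  have hsum1 : ∑ p : Q, δ q a p * vval δ T p = 1 := by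
    refine le_antisymm ?_ (hq1 ▸ hle)
    calc ∑ p : Q, δ q a p * vval δ T p ≤ ∑ p : Q, δ q a p * 1 :=
          Finset.sum_le_sum fun p _ => mul_le_mul_right (vval_le_one hδ p) _
      _ = 1 := by simp [hδ]
  refine ⟨a, fun p hp => ?_, hsum1⟩
  have heach : ∀ p : Q, δ q a p * vval δ T p = δ q a p := by
    refine sum_eq_of_le_of_sum_le
      (fun p => mul_le_of_le_one_right' (vval_le_one hδ p))
      (by rw [hδ]; exact ENNReal.one_ne_top) ?_
    rw [hδ, hsum1]
  have hsfin : (∑ p : Q, δ q a p) ≠ ∞ := by rw [hδ]; exact ENNReal.one_ne_top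
  have hfin : δ q a p ≠ ∞ :=
    ne_top_of_le_ne_top hsfin
      (Finset.single_le_sum (f := fun p => δ q a p) (fun p _ => zero_le) (Finset.mem_univ p))
  have := heach p
  rw [← mul_one (δ q a p)] at this
  exact (ENNReal.mul_right_inj hp hfin).mp (by rw [mul_one] at this ⊢; exact this)

end Aux

section Aux2

set_option linter.unusedSectionVars false

variable (δ : Q → A → Q → ℝ≥0∞) (T : Set Q) [DecidablePred (· ∈ T)]

/-- attractor layers towards `T` inside the almost-sure winning region. -/
def Attr : ℕ → Set Q
  | 0 => {q | q ∈ T ∧ vval δ T q = 1}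
  | k + 1 => Attr k ∪ {q | vval δ T q = 1 ∧ ∃ a : A,
      (∀ p, δ q a p ≠ 0 → vval δ T p = 1) ∧ ∃ p, δ q a p ≠ 0 ∧ p ∈ Attr k}

variable {δ T}

lemma Attr_mono : Monotone (Attr δ T) := by
  refine monotone_nat_of_le_succ fun k q hq => ?_
  rw [Attr]
  exact Or.inl hq

lemma vval_of_mem_Attr : ∀ (k : ℕ) {q : Q}, q ∈ Attr δ T k → vval δ T q = 1 := by
  intro k
  induction k with
  | zero => intro q hq; exact hq.2
  | succ k ih =>
    intro q hq
    rcases hq with hq | hq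
    · exact ih hq
    · exact hq.1

/-- Key lemma: every state of value one lies in some attractor layer. -/
lemma mem_Attr_of_vval_one (hδ : ∀ (q : Q) (a : A), ∑ p : Q, δ q a p = 1) [Nonempty A]
    {q0 : Q} (hq0 : vval δ T q0 = 1) : ∃ k, q0 ∈ Attr δ T k := by
  by_contra hq0A
  -- the "bad" set
  set B : Q → Prop := fun q => vval δ T q = 1 ∧ ¬∃ k, q ∈ Attr δ T k with hB
  -- minimal positive transition probability
  set S : Finset (Q × A × Q) :=
    Finset.univ.filter (fun x => δ x.1 x.2.1 x.2.2 ≠ 0) with hS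
  have hSne : S.Nonempty := by
    have a : A := Classical.arbitrary A
    have : ∃ p, δ q0 a p ≠ 0 := by
      by_contra hc
      push_neg at hc
      have := hδ q0 a
      rw [Finset.sum_eq_zero (fun p _ => hc p)] at this
      exact zero_ne_one this
    obtain ⟨p, hp⟩ := this
    exact ⟨(q0, a, p), by simp [hS, hp]⟩
  set dmin : ℝ≥0∞ := S.inf' hSne (fun x => δ x.1 x.2.1 x.2.2) with hdmin
  have hdmin_le : ∀ q a p, δ q a p ≠ 0 → dmin ≤ δ q a p := by
    intro q a p hp
    exact Finset.inf'_le (b := (q, a, p)) _ (by simp [hS, hp])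
  have hdmin_ne : dmin ≠ 0 := by
    obtain ⟨x, hx, hxe⟩ := Finset.exists_mem_eq_inf' hSne (fun x => δ x.1 x.2.1 x.2.2)
    rw [hdmin, hxe]
    simpa [hS] using hx
  -- bound on values outside the winning region
  set β : ℝ≥0∞ := (Finset.univ.filter (fun p => vval δ T p ≠ 1)).sup (vval δ T) with hβ
  have hβ_lt : β < 1 := by
    rw [hβ]
    refine Finset.sup_lt_iff (by simp) |>.mpr fun p hp => ?_
    simp only [Finset.mem_filter] at hp
    exact lt_of_le_of_ne (vval_le_one hδ p) hp.2
  have hβ_le : ∀ p, vval δ T p ≠ 1 → vval δ T p ≤ β := by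
    intro p hp
    exact Finset.le_sup (by simp [hp])
  set c : ℝ≥0∞ := 1 - dmin * (1 - β) with hc
  have hc_lt : c < 1 := by
    refine ENNReal.sub_lt_self ENNReal.one_ne_top one_ne_zero ?_
    refine mul_ne_zero hdmin_ne ?_
    rw [← pos_iff_ne_zero]
    exact tsub_pos_of_lt hβ_lt
  -- main quantitative bound
  have main : ∀ (t : ℕ) (σ : List Q → A) (h : List Q) (q : Q), B q →
      reachHist δ T σ t h q ≤ c := by
    intro t
    induction t with
    | zero =>
      intro σ h q hq
      have hqT : q ∉ T := fun hT => hq.2 ⟨0, hT, hq.1⟩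
      rw [reachHist, if_neg hqT]
      exact zero_le
    | succ t ih =>
      intro σ h q hq
      have hqT : q ∉ T := fun hT => hq.2 ⟨0, hT, hq.1⟩
      rw [reachHist, if_neg hqT]
      set a₀ := σ (q :: h) with ha₀
      by_cases hcase : ∀ p, δ q a₀ p ≠ 0 → vval δ T p = 1
      · by_cases hcase2 : ∃ p, δ q a₀ p ≠ 0 ∧ ∃ k, p ∈ Attr δ T k
        · exfalso
          obtain ⟨p, hp, k, hk⟩ := hcase2
          exact hq.2 ⟨k + 1, Or.inr ⟨hq.1, a₀, hcase, p, hp, hk⟩⟩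
        · push_neg at hcase2
          calc ∑ p : Q, δ q a₀ p * reachHist δ T σ t (q :: h) p
              ≤ ∑ p : Q, δ q a₀ p * c := by
                refine Finset.sum_le_sum fun p _ => ?_
                by_cases hp : δ q a₀ p = 0
                · simp [hp]
                · exact mul_le_mul_right (ih σ (q :: h) p ⟨hcase p hp, not_exists.mpr (hcase2 p hp)⟩) _
            _ = (∑ p : Q, δ q a₀ p) * c := by rw [Finset.sum_mul]
            _ = c := by rw [hδ, one_mul]
      · push_neg at hcase
        obtain ⟨p₀, hδp₀, hv₀⟩ := hcase
        have hβp₀ : reachHist δ T σ t (q :: h) p₀ ≤ β :=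
          le_trans (reachHist_le_vval _ _ _ _) (hβ_le p₀ hv₀)
        have key : (∑ p : Q, δ q a₀ p * reachHist δ T σ t (q :: h) p) + dmin * (1 - β) ≤ 1 := by
          have hsplit : ∑ p : Q, δ q a₀ p * reachHist δ T σ t (q :: h) p =
              (∑ p ∈ Finset.univ.erase p₀, δ q a₀ p * reachHist δ T σ t (q :: h) p) +
                δ q a₀ p₀ * reachHist δ T σ t (q :: h) p₀ :=
            (Finset.sum_erase_add _ _ (Finset.mem_univ p₀)).symm
          calc (∑ p : Q, δ q a₀ p * reachHist δ T σ t (q :: h) p) + dmin * (1 - β)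
              ≤ ((∑ p ∈ Finset.univ.erase p₀, δ q a₀ p) + δ q a₀ p₀ * β)
                  + δ q a₀ p₀ * (1 - β) := by
                rw [hsplit]
                refine add_le_add (add_le_add ?_ (mul_le_mul_right hβp₀ _))
                  (mul_le_mul_left (hdmin_le q a₀ p₀ hδp₀) _)
                refine Finset.sum_le_sum fun p _ => ?_
                exact mul_le_of_le_one_right' (reachHist_le_one hδ σ _ _ _)
            _ = (∑ p ∈ Finset.univ.erase p₀, δ q a₀ p) + δ q a₀ p₀ * (β + (1 - β)) := by
                rw [add_assoc, mul_add]
            _ = (∑ p ∈ Finset.univ.erase p₀, δ q a₀ p) + δ q a₀ p₀ := by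
                rw [add_tsub_cancel_of_le hβ_lt.le, mul_one]
            _ = ∑ p : Q, δ q a₀ p := Finset.sum_erase_add _ _ (Finset.mem_univ p₀)
            _ = 1 := hδ q a₀
        have hdfin : dmin * (1 - β) ≠ ∞ := by
          refine ENNReal.mul_ne_top ?_ (by
            exact ne_top_of_le_ne_top ENNReal.one_ne_top tsub_le_self)
          obtain ⟨x, hx, hxe⟩ := Finset.exists_mem_eq_inf' hSne (fun x => δ x.1 x.2.1 x.2.2)
          rw [hdmin, hxe]
          refine ne_top_of_le_ne_top (hδ x.1 x.2.1 ▸ ENNReal.one_ne_top) ?_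
          exact Finset.single_le_sum (f := fun p => δ x.1 x.2.1 p) (fun p _ => zero_le)
            (Finset.mem_univ x.2.2)
        exact (ENNReal.cancel_of_ne hdfin).le_tsub_of_add_le_right key
  have : vval δ T q0 ≤ c :=
    iSup_le fun σ => iSup_le fun t => main t σ [] q0 ⟨hq0, hq0A⟩
  rw [hq0] at this
  exact absurd this (not_le.mpr hc_lt)

end Aux2

section Aux3

set_option linter.unusedSectionVars false

variable {δ : Q → A → Q → ℝ≥0∞} {T : Set Q} [DecidablePred (· ∈ T)]

lemma reachMemoryless_mono (τ : Q → A) :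
    ∀ (t : ℕ) (q : Q), reachMemoryless δ T τ t q ≤ reachMemoryless δ T τ (t + 1) q := by
  intro t
  induction t with
  | zero =>
    intro q
    rw [reachMemoryless, reachMemoryless]
    by_cases hq : q ∈ T
    · simp [hq]
    · simp [hq]
  | succ t ih =>
    intro q
    rw [reachMemoryless, reachMemoryless]
    by_cases hq : q ∈ T
    · simp [hq]
    · simp only [if_neg hq]
      exact Finset.sum_le_sum fun p _ => mul_le_mul_right (ih p) _

lemma reachMemoryless_monotone (τ : Q → A) (q : Q) :
    Monotone fun t => reachMemoryless δ T τ t q :=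
  monotone_nat_of_le_succ fun t => reachMemoryless_mono τ t q

lemma reachMemoryless_of_mem (τ : Q → A) {q : Q} (hq : q ∈ T) :
    ∀ t, reachMemoryless δ T τ t q = 1 := by
  intro t
  cases t with
  | zero => rw [reachMemoryless, if_pos hq]
  | succ t => rw [reachMemoryless, if_pos hq]

lemma L_fixed (τ : Q → A) {q : Q} (hq : q ∉ T) :
    (⨆ t, reachMemoryless δ T τ t q) =
      ∑ p : Q, δ q (τ q) p * ⨆ t, reachMemoryless δ T τ t p := by
  have h1 : (⨆ t, reachMemoryless δ T τ t q) = ⨆ t, reachMemoryless δ T τ (t + 1) q := by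
    refine le_antisymm (iSup_le fun t => ?_) (iSup_le fun t => ?_)
    · exact le_iSup_of_le (f := fun t => reachMemoryless δ T τ (t + 1) q) t
        (reachMemoryless_mono τ t q)
    · exact le_iSup (fun t => reachMemoryless δ T τ t q) (t + 1)
  rw [h1]
  have h2 : ∀ t, reachMemoryless δ T τ (t + 1) q =
      ∑ p : Q, δ q (τ q) p * reachMemoryless δ T τ t p := by
    intro t; rw [reachMemoryless, if_neg hq]
  simp only [h2]
  rw [← ENNReal.finsetSum_iSup_of_monotone]
  · refine Finset.sum_congr rfl fun p _ => ?_
    rw [ENNReal.mul_iSup]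
  · intro p
    exact fun i j hij => mul_le_mul_right (reachMemoryless_monotone τ p hij) _

end Aux3


/-- In an MDP with finite state space (and finite action set),
almost-sure reachability objectives admit memoryless deterministic optimal
strategies: if some (history-dependent) strategy reaches the target set `T`
from state `s` with probability one, then some memoryless deterministic
strategy `τ : Q → A` reaches `T` from `s` with probability one. -/
theorem almost_sure_reachability_memoryless
    (δ : Q → A → Q → ℝ≥0∞) (hδ : ∀ (q : Q) (a : A), ∑ p : Q, δ q a p = 1)
    (T : Set Q) [DecidablePred (· ∈ T)] (s : Q)
    (h : ∃ σ : List Q → A, (⨆ t : ℕ, reachHist δ T σ t [] s) = 1) :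
    ∃ τ : Q → A, (⨆ t : ℕ, reachMemoryless δ T τ t s) = 1 := by
  classical
  obtain ⟨σ₀, hσ₀⟩ := h
  have hA : Nonempty A := ⟨σ₀ []⟩
  -- the start state has value one
  have hvs : vval δ T s = 1 := by
    refine le_antisymm (vval_le_one hδ s) ?_
    rw [← hσ₀]
    exact iSup_le fun t => reachHist_le_vval σ₀ t [] s
  -- choose the memoryless strategy
  have hchoice : ∀ q : Q, ∃ a : A,
      (vval δ T q = 1 ∧ q ∉ T ∧ ∃ k, q ∈ Attr δ T k) →
        ((∀ p, δ q a p ≠ 0 → vval δ T p = 1) ∧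
          ∃ p m, δ q a p ≠ 0 ∧ p ∈ Attr δ T m ∧ q ∉ Attr δ T m) := by
    intro q
    by_cases hyp : vval δ T q = 1 ∧ q ∉ T ∧ ∃ k, q ∈ Attr δ T k
    · obtain ⟨hv, hqT, hex⟩ := hyp
      have hfind := Nat.find_spec hex
      set k₀ := Nat.find hex with hk₀
      have hk₀pos : k₀ ≠ 0 := by
        intro hzero
        rw [hzero] at hfind
        exact hqT hfind.1
      obtain ⟨m, hm⟩ := Nat.exists_eq_succ_of_ne_zero hk₀pos
      rw [hm] at hfind
      have hqm : q ∉ Attr δ T m := Nat.find_min hex (by omega)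
      rcases hfind with hfind | hfind
      · exact absurd hfind hqm
      · obtain ⟨-, a, ha1, p, hp1, hp2⟩ := hfind
        exact ⟨a, fun _ => ⟨ha1, p, m, hp1, hp2, hqm⟩⟩
    · exact ⟨Classical.arbitrary A, fun hc => absurd hc hyp⟩
  choose τ hτ using hchoice
  refine ⟨τ, ?_⟩
  -- minimum of the memoryless values over the winning region
  set L : Q → ℝ≥0∞ := fun q => ⨆ t, reachMemoryless δ T τ t q with hL
  have hL_le_one : ∀ q, L q ≤ 1 :=
    fun q => iSup_le fun t => reachMemoryless_le_one hδ τ t q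
  set Wfin : Finset Q := Finset.univ.filter (fun q => vval δ T q = 1) with hWfin
  have hWne : Wfin.Nonempty := ⟨s, by simp [hWfin, hvs]⟩
  set μ : ℝ≥0∞ := Wfin.inf' hWne L with hμ
  have hμ_le : ∀ p, vval δ T p = 1 → μ ≤ L p := by
    intro p hp
    exact Finset.inf'_le _ (by simp [hWfin, hp])
  -- main claim : a minimizing state forces the minimum to be 1
  have claim : ∀ k : ℕ, ∀ q : Q, q ∈ Attr δ T k → L q = μ → μ = 1 := by
    intro k
    induction k using Nat.strong_induction_on with
    | _ k ih =>
      intro q hqk hLq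
      by_cases hqT : q ∈ T
      · rw [← hLq]
        refine le_antisymm (hL_le_one q) ?_
        calc (1 : ℝ≥0∞) = reachMemoryless δ T τ 0 q := (reachMemoryless_of_mem τ hqT 0).symm
          _ ≤ ⨆ t, reachMemoryless δ T τ t q :=
              le_iSup (fun t => reachMemoryless δ T τ t q) 0
          _ = L q := rfl
      · have hv : vval δ T q = 1 := vval_of_mem_Attr k hqk
        obtain ⟨hsupp, p₀, m, hδp₀, hp₀m, hqm⟩ := hτ q ⟨hv, hqT, k, hqk⟩
        have hmk : m < k := by
          by_contra hc
          exact hqm (Attr_mono (not_lt.mp hc) hqk)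
        -- harmonic equation at q
        have hfix : L q = ∑ p : Q, δ q (τ q) p * L p := L_fixed τ hqT
        -- all successors have value ≥ μ, and the sum equals μ
        have heach : ∀ p : Q, δ q (τ q) p * μ = δ q (τ q) p * L p := by
          refine sum_eq_of_le_of_sum_le (fun p => ?_) ?_ ?_
          · by_cases hp : δ q (τ q) p = 0
            · simp [hp]
            · exact mul_le_mul_right (hμ_le p (hsupp p hp)) _
          · rw [← hfix, hLq]
            exact ne_top_of_le_ne_top ENNReal.one_ne_top (hμ_le s hvs |>.trans (hL_le_one s))
          · rw [← hfix, hLq, ← Finset.sum_mul, hδ, one_mul]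
        have hδfin : δ q (τ q) p₀ ≠ ∞ :=
          ne_top_of_le_ne_top (hδ q (τ q) ▸ ENNReal.one_ne_top)
            (Finset.single_le_sum (f := fun p => δ q (τ q) p) (fun p _ => zero_le)
              (Finset.mem_univ p₀))
        have hLp₀ : L p₀ = μ :=
          ((ENNReal.mul_right_inj hδp₀ hδfin).mp (heach p₀)).symm
        exact ih m hmk p₀ hp₀m hLp₀
  -- the minimum is attained somewhere in the winning region
  obtain ⟨q₁, hq₁, hq₁e⟩ := Finset.exists_mem_eq_inf' hWne L
  have hq₁v : vval δ T q₁ = 1 := by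
    simpa [hWfin] using hq₁
  obtain ⟨k, hk⟩ := mem_Attr_of_vval_one hδ hq₁v
  have hμ1 : μ = 1 := claim k q₁ hk hq₁e.symm
  exact le_antisymm (hL_le_one s) (hμ1 ▸ hμ_le s hvs)
end

section
/- Simulating one round of the Countdown Game in the gadget construction preserves the invariant: if the main counter MC holds c, the game gadget marks exactly v, Player 1 plays (v,d) with d ≤ c and edge (v,d,v') ∈ E, the auxiliary counter AC is set to d, and then safe decrements of AC and MC are alternated until AC holds 0, then afterwards MC holds c − d and the game gadget marks some v' with (v,d,v') ∈ E. -/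
lemma testBit_split (k q a j : ℕ) (ha : a < 2 ^ k) :
    (2 ^ k * q + a).testBit j = if j < k then a.testBit j else q.testBit (j - k) := by
  rcases lt_or_ge j k with h | h
  · simp only [h, if_true]
    have hk : 2 ^ k * q + a = a + 2 ^ j * (2 ^ (k - j) * q) := by
      rw [← mul_assoc, ← pow_add]
      have : j + (k - j) = k := by omega
      rw [this]; ring
    rw [hk, Nat.testBit_eq_decide_div_mod_eq, Nat.testBit_eq_decide_div_mod_eq,
      Nat.add_mul_div_left _ _ (Nat.two_pow_pos j)]
    have hkj : k - j ≠ 0 := by omega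
    obtain ⟨m, hm⟩ := Nat.exists_eq_succ_of_ne_zero hkj
    rw [hm, pow_succ]
    have : a / 2 ^ j + 2 ^ m * 2 * q = a / 2 ^ j + 2 * (2 ^ m * q) := by ring
    rw [this, Nat.add_mul_mod_self_left]
  · simp only [Nat.not_lt.mpr h, if_false]
    have hj : j = k + (j - k) := by omega
    rw [Nat.testBit_eq_decide_div_mod_eq, hj, pow_add, ← Nat.div_div_eq_div_mul,
      Nat.mul_add_div (Nat.two_pow_pos k), Nat.div_eq_of_lt ha, Nat.add_zero,
      ← Nat.testBit_eq_decide_div_mod_eq, Nat.add_sub_cancel_left]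

lemma xor_split (k q a b : ℕ) (ha : a < 2 ^ k) (hb : b < 2 ^ k) :
    (2 ^ k * q + a) ^^^ b = 2 ^ k * q + (a ^^^ b) := by
  apply Nat.eq_of_testBit_eq
  intro j
  rw [Nat.testBit_xor, testBit_split k q a j ha,
    testBit_split k q (a ^^^ b) j (Nat.xor_lt_two_pow ha hb)]
  rcases lt_or_ge j k with h | h
  · simp [h, Nat.testBit_xor]
  · have : b.testBit j = false := Nat.testBit_eq_false_of_lt (lt_of_lt_of_le hb
      (Nat.pow_le_pow_right (by norm_num) h))
    simp [Nat.not_lt.mpr h, this]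

lemma safeDec_mod (c i : ℕ) (h : safeDec c i) : c % 2 ^ (i + 1) = 2 ^ i := by
  obtain ⟨h1, h2⟩ := h
  apply Nat.eq_of_testBit_eq
  intro j
  rw [Nat.testBit_mod_two_pow]
  rcases lt_trichotomy j i with hj | hj | hj
  · simp [h2 j hj, Nat.testBit_two_pow_of_ne (by omega : i ≠ j)]
  · subst hj; simp [h1, Nat.testBit_two_pow_self]
  · have : ¬ j < i + 1 := by omega
    simp [this, Nat.testBit_two_pow_of_ne (by omega : i ≠ j)]

lemma pow_xor_sub_one (i : ℕ) : 2 ^ i ^^^ (2 ^ (i + 1) - 1) = 2 ^ i - 1 := by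
  apply Nat.eq_of_testBit_eq
  intro j
  rw [Nat.testBit_xor, Nat.testBit_two_pow_sub_one, Nat.testBit_two_pow_sub_one]
  rcases lt_trichotomy j i with hj | hj | hj
  · have h1 : i ≠ j := by omega
    have h2 : j < i + 1 := by omega
    simp [hj, Nat.testBit_two_pow_of_ne h1, h2]
  · subst hj
    simp [Nat.testBit_two_pow_self]
  · have h1 : i ≠ j := by omega
    have h2 : ¬ j < i + 1 := by omega
    have h3 : ¬ j < i := by omega
    simp [Nat.testBit_two_pow_of_ne h1, h2, h3]

lemma applyDec_eq_sub_one (c i : ℕ) (h : safeDec c i) : applyDec c i = c - 1 := by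
  have hmod := safeDec_mod c i h
  have hc : c = 2 ^ (i + 1) * (c / 2 ^ (i + 1)) + 2 ^ i := by
    conv_lhs => rw [← Nat.div_add_mod c (2 ^ (i + 1))]
    rw [hmod]
  have hlt : 2 ^ i < 2 ^ (i + 1) := Nat.pow_lt_pow_right (by norm_num) (by omega)
  have hb : 2 ^ (i + 1) - 1 < 2 ^ (i + 1) := by
    have := Nat.two_pow_pos (i + 1); omega
  rw [applyDec]
  conv_lhs => rw [hc]
  rw [xor_split _ _ _ _ hlt hb, pow_xor_sub_one]
  have := Nat.two_pow_pos i
  omega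

lemma vals_eq {d : ℕ} (vals : Fin (d + 1) → ℕ)
    (hstep : ∀ j : Fin d, ∃ i, safeDec (vals j.castSucc) i ∧
      vals j.succ = applyDec (vals j.castSucc) i) :
    ∀ k : Fin (d + 1), vals k = vals 0 - k.val := by
  intro k
  induction k using Fin.induction with
  | zero => simp
  | succ j ih =>
    obtain ⟨i, hsafe, heq⟩ := hstep j
    have hpos : 0 < vals j.castSucc := by
      apply Nat.pos_of_ne_zero
      intro h0
      rw [h0] at hsafe
      simpa using hsafe.1
    rw [heq, applyDec_eq_sub_one _ _ hsafe, ih]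
    simp only [Fin.val_succ, Fin.coe_castSucc]
    rw [ih, Fin.coe_castSucc] at hpos
    omega

/-- Simulating one round of the Countdown Game preserves the
invariant.  Suppose the main counter `MC` holds `c`, the game gadget marks
exactly the vertex `v`, Player 1 plays `(v, d)` with `d ≤ c` along an edge
`(v, d, v') ∈ E` (which sets the auxiliary counter `AC` to `d` and moves the
game component to a successor `v'`), and then safe decrements of `AC` and `MC`
are alternated (`d` safe decrements on each) until `AC` holds `0`.  Then
afterwards `AC` holds `0`, `MC` holds `c − d`, and the game gadget marks a
vertex `v'` with `(v, d, v') ∈ E`. -/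
theorem simulate_round_invariant {V : Type*} (E : Set (V × ℕ × V))
    (v v' : V) (c d : ℕ) (hd : 0 < d) (hdc : d ≤ c)
    (hedge : (v, d, v') ∈ E)
    (acVals mcVals : Fin (d + 1) → ℕ)
    (hac0 : acVals 0 = d) (hmc0 : mcVals 0 = c)
    (hacstep : ∀ j : Fin d, ∃ i, safeDec (acVals j.castSucc) i ∧
      acVals j.succ = applyDec (acVals j.castSucc) i)
    (hmcstep : ∀ j : Fin d, ∃ i, safeDec (mcVals j.castSucc) i ∧
      mcVals j.succ = applyDec (mcVals j.castSucc) i) :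
    acVals (Fin.last d) = 0 ∧ mcVals (Fin.last d) = c - d ∧
      ∃ u : V, (v, d, u) ∈ E := by
  have hac := vals_eq acVals hacstep (Fin.last d)
  have hmc := vals_eq mcVals hmcstep (Fin.last d)
  rw [hac0] at hac
  rw [hmc0] at hmc
  simp only [Fin.val_last] at hac hmc
  exact ⟨by omega, hmc, v', hedge⟩
end
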